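/- arXiv:2010.15959 — 6 statements merged into one kernel-verified Lean document; each statement's English description precedes it below -/
import Mathlib

section
/- Let d ≥ 3 and let x₁,…,x₈ ∈ ℝ^d be the special point set. Then for every m ≥ 1 and every choice of vectors w₁,…,w_m ∈ ℝ^d, the 8×m matrix E with entries E_{ij} = (xᵢᵀwⱼ)₊ has rank at most 7. -/
open MeasureTheory Matrix
open scoped InnerProductSpace Matrix.Norms.L2Operator

/-- The uniform probability measure on the unit sphere `S^{d-1} ⊆ ℝ^d`,
viewed as a measure on the ambient Euclidean space. -/
noncomputable def sphereUniform (d : ℕ) : Measure (EuclideanSpace ℝ (Fin d)) :=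
  (((volume : Measure (EuclideanSpace ℝ (Fin d))).toSphere Set.univ)⁻¹ •
    (volume : Measure (EuclideanSpace ℝ (Fin d))).toSphere).map Subtype.val

/-- Sign pattern of the special eight-point set. -/
noncomputable def sgn : Fin 8 → Fin 3 → ℝ :=
  ![![1,1,1], ![-1,1,1], ![1,-1,1], ![1,1,-1], ![-1,-1,1], ![-1,1,-1], ![1,-1,-1], ![-1,-1,-1]]

/-- The special point set `x₁, …, x₈ ∈ ℝ^d`: the first three coordinates are `±1/√3`
with the sign pattern `sgn`, and all remaining coordinates vanish. -/
noncomputable def pts (d : ℕ) (i : Fin 8) : Fin d → ℝ :=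
  fun j => if h : (j : ℕ) < 3 then (1 / Real.sqrt 3) * sgn i ⟨j, h⟩ else 0

/-- The special point set, viewed in Euclidean space. -/
noncomputable def ptsE (d : ℕ) (i : Fin 8) : EuclideanSpace ℝ (Fin d) :=
  (WithLp.equiv 2 (Fin d → ℝ)).symm (pts d i)

/-- Smallest eigenvalue of a real symmetric matrix, via the Rayleigh quotient. -/
noncomputable def lamMin {n : ℕ} (A : Matrix (Fin n) (Fin n) ℝ) : ℝ :=
  sInf {r | ∃ u : Fin n → ℝ, ∑ i, u i ^ 2 = 1 ∧ r = u ⬝ᵥ A.mulVec u}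

/-- Largest eigenvalue of a real symmetric matrix, via the Rayleigh quotient. -/
noncomputable def lamMax {n : ℕ} (A : Matrix (Fin n) (Fin n) ℝ) : ℝ :=
  sSup {r | ∃ u : Fin n → ℝ, ∑ i, u i ^ 2 = 1 ∧ r = u ⬝ᵥ A.mulVec u}

/-- Euclidean norm of a vector in `ℝ^n`. -/
noncomputable def e2 {n : ℕ} (v : Fin n → ℝ) : ℝ := Real.sqrt (∑ i, v i ^ 2)

/-- The vector `v = (1,−1,−1,−1,1,1,1,−1)`. -/
noncomputable def vv : Fin 8 → ℝ := ![1, -1, -1, -1, 1, 1, 1, -1]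

/-!
The eight points come in antipodal pairs `x₉₋ᵢ = -xᵢ`, and `v` gives opposite weights to the two
points of each pair. Since `(z)₊ - (-z)₊ = z`, the combination `∑ vᵢ (xᵢᵀw)₊` therefore equals
`(x₁ - x₂ - x₃ - x₄)ᵀw = 0` for every `w`. So the nonzero vector `v` annihilates every column of `E`
from the left, and the rank of `E` is less than `8`.
-/

theorem Matrix.rank_lt_card_height_of_vecMul_eq_zero {K m n : Type*} [Field K] [Fintype m]
    [Fintype n] {A : Matrix m n K} {v : m → K} (hv : v ≠ 0) (h : v ᵥ* A = 0) :
    A.rank < Fintype.card m := by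
  have hker : v ∈ LinearMap.ker Aᵀ.mulVecLin := by
    rwa [LinearMap.mem_ker, mulVecLin_apply, mulVec_transpose]
  have hpos : 1 ≤ Module.finrank K (LinearMap.ker Aᵀ.mulVecLin) :=
    Submodule.one_le_finrank_iff.mpr ((Submodule.ne_bot_iff _).mpr ⟨v, hker, hv⟩)
  have hsum := LinearMap.finrank_range_add_finrank_ker Aᵀ.mulVecLin
  rw [Module.finrank_fintype_fun_eq_card] at hsum
  rw [← rank_transpose]
  exact (Nat.lt_add_of_pos_right hpos).trans_eq hsum

theorem sum_vv_mul_max_sgn_dotProduct_eq_zero (t : Fin 3 → ℝ) :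
    ∑ i, vv i * max (sgn i ⬝ᵥ t) 0 = 0 := by
  have h₀ := max_zero_sub_max_neg_zero_eq_self (t 0 + t 1 + t 2)
  have h₁ := max_zero_sub_max_neg_zero_eq_self (-t 0 + t 1 + t 2)
  have h₂ := max_zero_sub_max_neg_zero_eq_self (t 0 - t 1 + t 2)
  have h₃ := max_zero_sub_max_neg_zero_eq_self (t 0 + t 1 - t 2)
  simp only [vv, dotProduct, sgn, cons_val', cons_val_fin_one, Fin.sum_univ_three, cons_val_zero,
    cons_val_one, cons_val, Fin.sum_univ_eight, one_mul, neg_mul]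
  ring_nf at h₀ h₁ h₂ h₃ ⊢
  linarith

noncomputable def ptsBasis (d : ℕ) : Matrix (Fin 3) (Fin d) ℝ :=
  Matrix.of fun k j => if (j : ℕ) = k then 1 / Real.sqrt 3 else 0

theorem pts_eq_sgn_vecMul_ptsBasis (d : ℕ) (i : Fin 8) : pts d i = sgn i ᵥ* ptsBasis d := by
  funext ⟨j, hj⟩
  rcases j with _ | _ | _ | j <;>
    simp [pts, vecMul, dotProduct, Fin.sum_univ_three, ptsBasis, mul_comm]

theorem pts_dotProduct (d : ℕ) (i : Fin 8) (w : Fin d → ℝ) :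
    pts d i ⬝ᵥ w = sgn i ⬝ᵥ (ptsBasis d *ᵥ w) := by
  rw [pts_eq_sgn_vecMul_ptsBasis, dotProduct_mulVec]

theorem stmt_0_general (d m : ℕ) (w : Fin m → Fin d → ℝ) :
    (Matrix.of fun (i : Fin 8) (j : Fin m) => max (pts d i ⬝ᵥ w j) 0).rank ≤ 7 := by
  have hvv : vv ≠ 0 := fun h => by simpa [vv] using congrFun h 0
  have hE : vv ᵥ* Matrix.of (fun (i : Fin 8) (j : Fin m) => max (pts d i ⬝ᵥ w j) 0) = 0 := by
    funext j
    simp only [pts_dotProduct]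
    exact sum_vv_mul_max_sgn_dotProduct_eq_zero (ptsBasis d *ᵥ w j)
  simpa using Nat.le_of_lt_succ (rank_lt_card_height_of_vecMul_eq_zero hvv hE)

/-- for `d ≥ 3`, any `m ≥ 1` and any `w₁,…,w_m ∈ ℝ^d`, the `8 × m`
matrix `E` with `E_{ij} = (xᵢᵀ wⱼ)₊` has rank at most `7`. -/
theorem stmt_0 (d m : ℕ) (hd : 3 ≤ d) (hm : 1 ≤ m) (w : Fin m → Fin d → ℝ) :
    (Matrix.of fun (i : Fin 8) (j : Fin m) => max (pts d i ⬝ᵥ w j) 0).rank ≤ 7 :=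
  stmt_0_general d m w
end

section
/- Let d ≥ 3, let x₁,…,x₈ ∈ ℝ^d be the special point set, and let v = (1,−1,−1,−1,1,1,1,−1) ∈ ℝ⁸. Then for every w ∈ ℝ^d, the identity ∑_{i=1}^{8} vᵢ (wᵀxᵢ)₊ = 0 holds. -/
open MeasureTheory Matrix
open scoped InnerProductSpace Matrix.Norms.L2Operator

/-!
The configuration is antipodal, `x₉₋ᵢ = -xᵢ`, and the weights are odd, `v₉₋ᵢ = -vᵢ`. Pairing `i`
with `9 - i` and using `(t)₊ - (-t)₊ = t`, the sum becomes `½ ⟪w, ∑ᵢ vᵢ xᵢ⟫`, and `∑ᵢ vᵢ xᵢ = 0`.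
-/
theorem sum_mul_max_zero_of_odd {ι : Type*} [Fintype ι] (σ : Equiv.Perm ι) {v a : ι → ℝ}
    (hv : ∀ i, v (σ i) = -v i) (ha : ∀ i, a (σ i) = -a i) :
    ∑ i, v i * max (a i) 0 = (∑ i, v i * a i) / 2 := by
  have h_neg : ∑ i, v i * max (a i) 0 = -∑ i, v i * max (-a i) 0 := by
    rw [← Equiv.sum_comp σ, ← Finset.sum_neg_distrib]
    simp only [hv, ha, neg_mul]
  have h_diff : ∑ i, v i * (max (a i) 0 - max (-a i) 0) = ∑ i, v i * a i := by
    simp only [max_zero_sub_max_neg_zero_eq_self]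
  simp only [mul_sub, Finset.sum_sub_distrib] at h_diff
  linarith

theorem sgn_rev (i : Fin 8) : sgn i.rev = -sgn i := by
  fin_cases i <;> ext k <;> fin_cases k <;> simp [sgn]

theorem vv_rev (i : Fin 8) : vv i.rev = -vv i := by
  fin_cases i <;> simp [vv]

theorem sum_vv_smul_sgn : ∑ i, vv i • sgn i = 0 := by
  ext k
  fin_cases k <;> simp [Fin.sum_univ_eight, vv, sgn]

theorem pts_rev (d : ℕ) (i : Fin 8) : pts d i.rev = -pts d i := by
  ext j
  simp only [pts, sgn_rev, Pi.neg_apply]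
  split_ifs <;> simp

theorem sum_vv_smul_pts (d : ℕ) : ∑ i, vv i • pts d i = 0 := by
  ext j
  simp only [pts, Finset.sum_apply, Pi.smul_apply, smul_eq_mul, Pi.zero_apply]
  split_ifs with h
  · have h_sgn := congrFun sum_vv_smul_sgn ⟨j, h⟩
    simp only [Finset.sum_apply, Pi.smul_apply, smul_eq_mul, Pi.zero_apply] at h_sgn
    simp_rw [mul_left_comm (vv _), ← Finset.mul_sum, h_sgn, mul_zero]
  · simp

theorem stmt_1_general (d : ℕ) (w : Fin d → ℝ) :
    ∑ i : Fin 8, vv i * max (w ⬝ᵥ pts d i) 0 = 0 := by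
  rw [sum_mul_max_zero_of_odd Fin.revPerm vv_rev (a := fun i => w ⬝ᵥ pts d i)
    (fun i => by simp [Fin.revPerm_apply, pts_rev])]
  have h_lin : ∑ i, vv i * (w ⬝ᵥ pts d i) = w ⬝ᵥ ∑ i, vv i • pts d i := by
    simp [dotProduct_sum, dotProduct_smul]
  rw [h_lin, sum_vv_smul_pts, dotProduct_zero, zero_div]

/-- for `d ≥ 3` and every `w ∈ ℝ^d`, `∑ᵢ vᵢ (wᵀxᵢ)₊ = 0`. -/
theorem stmt_1 (d : ℕ) (hd : 3 ≤ d) (w : Fin d → ℝ) :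
    ∑ i : Fin 8, vv i * max (w ⬝ᵥ pts d i) 0 = 0 :=
  stmt_1_general d w
end

section
/- Let d ≥ 3, n ≥ 8, and let X ∈ ℝ^{d×n} be any matrix whose first eight columns are the special point set x₁,…,x₈ (the remaining columns arbitrary). Define q ∈ ℝⁿ by q = (1,−1,−1,−1,1,1,1,−1,0,…,0). Then q ≠ 0, and for every y ∈ ℝⁿ with yᵀq ≠ 0, every m ≥ 1, every weight matrix W ∈ ℝ^{d×m}, and every α ∈ ℝ^m, one has m^{−1/2}(XᵀW)₊ α ≠ y, where (·)₊ is applied entrywise; in particular the training loss ‖m^{−1/2}(XᵀW)₊ α − y‖₂² is strictly positive for all choices of W and α. -/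
/-!
Since `max z 0 - max (-z) 0 = z`, a weight vector `v` that is odd under an involution `σ`
annihilates `(z i)₊` as soon as it annihilates `z` and `z` is odd under `σ` as well. The eight
points come in antipodal pairs `x (rev i) = -x i`, the weights `q` satisfy `q (rev i) = -q i`, and
`∑ qᵢ xᵢ = 0`; so for every hidden unit `w` the vector `(⟨xᵢ, w⟩)₊` is orthogonal to `q`, hence
so is every network output, which therefore never equals a `y` with `yᵀq ≠ 0`.
-/

open MeasureTheory Matrix
open scoped InnerProductSpace Matrix.Norms.L2Operator

theorem dotProduct_max_zero_eq_zero_of_odd {ι : Type*} [Fintype ι] (σ : Equiv.Perm ι)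
    {v z : ι → ℝ} (hv : ∀ i, v (σ i) = -v i) (hz : ∀ i, z (σ i) = -z i) (h : v ⬝ᵥ z = 0) :
    v ⬝ᵥ (fun i => max (z i) 0) = 0 := by
  have hswap : v ⬝ᵥ (fun i => max (z i) 0) = -(v ⬝ᵥ fun i => max (-z i) 0) := by
    simp only [dotProduct, ← Equiv.sum_comp σ (fun i => v i * max (z i) 0), hv, hz,
      neg_mul, Finset.sum_neg_distrib]
  have hsplit : v ⬝ᵥ (fun i => max (z i) 0) - v ⬝ᵥ (fun i => max (-z i) 0) = v ⬝ᵥ z := by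
    simp only [← dotProduct_sub, Pi.sub_def, max_zero_sub_max_neg_zero_eq_self]
  linarith

theorem vecMul_map_max_zero_mul_eq_zero_of_odd {ι κ μ : Type*} [Fintype ι] [Fintype κ]
    (σ : Equiv.Perm ι) {v : ι → ℝ} {P : Matrix ι κ ℝ} (hv : ∀ i, v (σ i) = -v i)
    (hP : ∀ i, P (σ i) = -P i) (hvP : vecMul v P = 0) (W : Matrix κ μ ℝ) :
    vecMul v ((P * W).map fun z => max z 0) = 0 := by
  funext k
  refine dotProduct_max_zero_eq_zero_of_odd σ hv (fun i => ?_) ?_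
  · simp only [mul_apply', hP, neg_dotProduct]
  · change vecMul v (P * W) k = 0
    rw [← vecMul_vecMul, hvP, zero_vecMul, Pi.zero_apply]

theorem dite_dotProduct_eq_dotProduct_comp_castLE {k n : ℕ} (h : k ≤ n) (v : Fin k → ℝ)
    (u : Fin n → ℝ) :
    (fun i : Fin n => if hi : i.val < k then v ⟨i, hi⟩ else 0) ⬝ᵥ u
      = v ⬝ᵥ (u ∘ Fin.castLE h) := by
  refine (Fintype.sum_of_injective (Fin.castLE h) (Fin.castLE_injective h) _ _ ?_ ?_).symm
  · intro i hi
    have : ¬ i.val < k := fun hik => hi ⟨⟨i, hik⟩, rfl⟩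
    simp [this]
  · intro i
    simp

theorem sum_sq_sub_pos_of_ne {ι : Type*} [Fintype ι] {f g : ι → ℝ} (h : f ≠ g) :
    0 < ∑ i, (f i - g i) ^ 2 := by
  obtain ⟨i, hi⟩ := Function.ne_iff.mp h
  exact Finset.sum_pos' (fun i _ => sq_nonneg _) ⟨i, Finset.mem_univ _, by
    have := sub_ne_zero.mpr hi; positivity⟩

theorem vecMul_vv_sgn : vecMul vv (of sgn) = 0 := by
  funext j
  fin_cases j <;> simp [vecMul, dotProduct, Fin.sum_univ_eight, vv, sgn]

theorem vecMul_vv_pts (d : ℕ) : vecMul vv (of (pts d)) = 0 := by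
  funext j
  by_cases hj : (j : ℕ) < 3
  · have := congrFun vecMul_vv_sgn ⟨j, hj⟩
    simp only [vecMul, dotProduct, of_apply, pts, hj, dite_true, Pi.zero_apply] at this ⊢
    simp only [mul_left_comm _ (1 / √3), ← Finset.mul_sum, this, mul_zero]
  · simp [vecMul, dotProduct, pts, hj]

theorem stmt_2_general (d n : ℕ) (hn : 8 ≤ n)
    (X : Matrix (Fin d) (Fin n) ℝ)
    (hX : ∀ (i : Fin 8) (j : Fin d), X j ⟨(i : ℕ), lt_of_lt_of_le i.isLt hn⟩ = pts d i j)
    (q : Fin n → ℝ)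
    (hq : q = fun i : Fin n => if h : i.val < 8 then vv ⟨i.val, h⟩ else 0) :
    q ≠ 0 ∧
    ∀ (y : Fin n → ℝ), y ⬝ᵥ q ≠ 0 → ∀ (m : ℕ), 1 ≤ m →
      ∀ (W : Matrix (Fin d) (Fin m) ℝ) (α : Fin m → ℝ),
        ((1 / Real.sqrt m) • ((Xᵀ * W).map fun z => max z 0)).mulVec α ≠ y ∧
        0 < ∑ i, (((1 / Real.sqrt m) • ((Xᵀ * W).map fun z => max z 0)).mulVec α i - y i) ^ 2 := by
  subst hq
  refine ⟨fun h => by simpa [vv] using congrFun h (Fin.castLE hn 0), fun y hy m _ W α => ?_⟩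
  set relu : Matrix (Fin 8) (Fin m) ℝ → Matrix (Fin 8) (Fin m) ℝ := fun M => M.map (max · 0)
  set F := ((1 / Real.sqrt m) • ((Xᵀ * W).map fun z => max z 0)).mulVec α
  have hrows : ∀ i k, (Xᵀ * W) (Fin.castLE hn i) k = (of (pts d) * W) i k := fun i k => by
    simp only [mul_apply, transpose_apply, of_apply]
    exact Finset.sum_congr rfl fun j _ => by rw [← hX]; rfl
  have hF : F ∘ Fin.castLE hn = ((1 / Real.sqrt m) • relu (of (pts d) * W)).mulVec α := by
    funext i
    simp only [F, relu, Function.comp_apply, mulVec, dotProduct, Matrix.smul_apply, map_apply,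
      hrows]
  have hunits : vecMul vv (relu (of (pts d) * W)) = 0 :=
    vecMul_map_max_zero_mul_eq_zero_of_odd Fin.revPerm vv_rev (pts_rev d) (vecMul_vv_pts d) W
  have horth : F ⬝ᵥ (fun i : Fin n => if h : i.val < 8 then vv ⟨i.val, h⟩ else 0) = 0 := by
    rw [dotProduct_comm, dite_dotProduct_eq_dotProduct_comp_castLE hn, hF, dotProduct_mulVec,
      Matrix.vecMul_smul, hunits, smul_zero, zero_dotProduct]
  have hne : F ≠ y := fun h => hy (h ▸ horth)
  exact ⟨hne, sum_sq_sub_pos_of_ne hne⟩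

/-- if the first eight columns of `X` form the special point set and
`yᵀq ≠ 0` for `q = (1,−1,−1,−1,1,1,1,−1,0,…,0)`, then no width-`m` bias-free ReLU
network output `m^{-1/2} (XᵀW)₊ α` can equal `y`; in particular the training loss
is strictly positive for all `W, α`. -/
theorem stmt_2 (d n : ℕ) (hd : 3 ≤ d) (hn : 8 ≤ n)
    (X : Matrix (Fin d) (Fin n) ℝ)
    (hX : ∀ (i : Fin 8) (j : Fin d), X j ⟨(i : ℕ), lt_of_lt_of_le i.isLt hn⟩ = pts d i j)
    (q : Fin n → ℝ)
    (hq : q = fun i : Fin n => if h : i.val < 8 then vv ⟨i.val, h⟩ else 0) :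
    q ≠ 0 ∧
    ∀ (y : Fin n → ℝ), y ⬝ᵥ q ≠ 0 → ∀ (m : ℕ), 1 ≤ m →
      ∀ (W : Matrix (Fin d) (Fin m) ℝ) (α : Fin m → ℝ),
        ((1 / Real.sqrt m) • ((Xᵀ * W).map fun z => max z 0)).mulVec α ≠ y ∧
        0 < ∑ i, (((1 / Real.sqrt m) • ((Xᵀ * W).map fun z => max z 0)).mulVec α i - y i) ^ 2 :=
  stmt_2_general d n hn X hX q hq
end

section
/- Let d ≥ 3 and let x₁,…,x₈ ∈ ℝ^d be the special point set. Define the 8×8 neural tangent kernel matrix G by G_{ij} = ∫_{S^{d−1}} xᵢᵀxⱼ · 1_{xᵢᵀw>0} · 1_{wᵀxⱼ>0} dσ(w), where 1_{z>0} equals 1 if z > 0 and 0 otherwise. Then Gv = 0 for the nonzero vector v = (1,−1,−1,−1,1,1,1,−1); in particular G is singular. -/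
open MeasureTheory Matrix
open scoped InnerProductSpace Matrix.Norms.L2Operator

/-!
Write the points as `a + b + c, a, b, c, -c, -b, -a, -(a + b + c)` with `a, b, c = x₂, x₃, x₄`.
Entry `i` of `G v` is the integral of `1{⟪xᵢ, w⟫ > 0} ⟪xᵢ, ∑ⱼ vⱼ 1{⟪w, xⱼ⟫ > 0} xⱼ⟫`. For `w`
off the null set of hyperplanes `xⱼ^⊥` we have `1{⟪w, -x⟫ > 0} = 1 - 1{⟪w, x⟫ > 0}`, so the inner
sum collapses to `x₁ - x₂ - x₃ - x₄ = 0`.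
-/

noncomputable def heaviside (t : ℝ) : ℝ := if 0 < t then 1 else 0

lemma heaviside_neg {t : ℝ} (ht : t ≠ 0) : heaviside (-t) = 1 - heaviside t := by
  rcases ht.lt_or_gt with h | h
  · simp [heaviside, neg_pos.2 h, h.not_gt]
  · simp [heaviside, h, h.le]

lemma measurable_heaviside : Measurable heaviside :=
  Measurable.ite measurableSet_Ioi measurable_const measurable_const

lemma norm_heaviside_le_one (t : ℝ) : ‖heaviside t‖ ≤ 1 := by
  unfold heaviside; split_ifs <;> simp

section NTK

variable {E ι : Type*} [NormedAddCommGroup E] [InnerProductSpace ℝ E] [MeasurableSpace E]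

noncomputable def ntkGram (μ : Measure E) (x : ι → E) : Matrix ι ι ℝ :=
  Matrix.of fun i j => ∫ w, ⟪x i, x j⟫_ℝ * (heaviside ⟪x i, w⟫_ℝ * heaviside ⟪w, x j⟫_ℝ) ∂μ

lemma ntkGram_mulVec [Fintype ι] [OpensMeasurableSpace E] (μ : Measure E) [IsFiniteMeasure μ]
    (x : ι → E) (v : ι → ℝ) :
    ntkGram μ x *ᵥ v = fun i =>
      ∫ w, heaviside ⟪x i, w⟫_ℝ * ⟪x i, ∑ j, (v j * heaviside ⟪w, x j⟫_ℝ) • x j⟫_ℝ ∂μ := by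
  have hint : ∀ i j, Integrable
      (fun w => ⟪x i, x j⟫_ℝ * (heaviside ⟪x i, w⟫_ℝ * heaviside ⟪w, x j⟫_ℝ) * v j) μ := by
    intro i j
    refine (Integrable.of_bound (C := 1) ?_ (.of_forall fun w => ?_) |>.const_mul _).mul_const _
    · exact (measurable_heaviside.comp (continuous_const.inner continuous_id).measurable).mul
        (measurable_heaviside.comp (continuous_id.inner continuous_const).measurable)
        |>.aestronglyMeasurable
    · simpa [norm_mul] using mul_le_one₀ (norm_heaviside_le_one _) (norm_nonneg _)
        (norm_heaviside_le_one _)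
  funext i
  simp only [mulVec, dotProduct, ntkGram, of_apply, ← integral_mul_const]
  rw [← integral_finsetSum _ fun j _ => hint i j]
  congr 1 with w
  simp only [inner_sum, inner_smul_right, Finset.mul_sum]
  exact Finset.sum_congr rfl fun j _ => by ring

end NTK

lemma sum_vv_mul_heaviside_smul_eq_zero {E : Type*} [NormedAddCommGroup E] [InnerProductSpace ℝ E]
    {a b c w : E} {y : Fin 8 → E} (hy : y = ![a + b + c, a, b, c, -c, -b, -a, -(a + b + c)])
    (hw : ∀ k, ⟪w, y k⟫_ℝ ≠ 0) :
    ∑ j, (vv j * heaviside ⟪w, y j⟫_ℝ) • y j = 0 := by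
  subst hy
  have h0 := hw 0; have h1 := hw 1; have h2 := hw 2; have h3 := hw 3
  simp only [Matrix.cons_val] at h0 h1 h2 h3
  simp only [Fin.sum_univ_eight, vv, Matrix.cons_val, inner_neg_right, heaviside_neg h0,
    heaviside_neg h1, heaviside_neg h2, heaviside_neg h3]
  module

namespace MeasureTheory.Measure

open scoped Pointwise

variable {E : Type*} [NormedAddCommGroup E] [NormedSpace ℝ E] [MeasurableSpace E] [BorelSpace E]
  [FiniteDimensional ℝ E]

lemma toSphere_preimage_submodule_eq_zero (μ : Measure E) [μ.IsAddHaarMeasure]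
    {K : Submodule ℝ E} (hK : K ≠ ⊤) :
    μ.toSphere (Subtype.val ⁻¹' (K : Set E)) = 0 := by
  have hcone : Set.Ioo (0 : ℝ) 1 •
      (Subtype.val '' (Subtype.val ⁻¹' K : Set (Metric.sphere (0 : E) 1))) ⊆ (K : Set E) := by
    rintro _ ⟨r, -, _, ⟨u, hu, rfl⟩, rfl⟩
    exact K.smul_mem r hu
  rw [toSphere_apply' μ (K.closed_of_finiteDimensional.measurableSet.preimage
    measurable_subtype_coe), measure_mono_null hcone (addHaar_submodule μ K hK), mul_zero]

end MeasureTheory.Measure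

instance (d : ℕ) : IsFiniteMeasure (sphereUniform d) := by
  refine ⟨?_⟩
  rw [sphereUniform, Measure.map_apply measurable_subtype_coe MeasurableSet.univ]
  simp only [Set.preimage_univ, Measure.smul_apply, smul_eq_mul]
  exact (ENNReal.inv_mul_le_one _).trans_lt ENNReal.one_lt_top

lemma sphereUniform_submodule_eq_zero {d : ℕ} {K : Submodule ℝ (EuclideanSpace ℝ (Fin d))}
    (hK : K ≠ ⊤) : sphereUniform d K = 0 := by
  rw [sphereUniform, Measure.map_apply measurable_subtype_coe
    K.closed_of_finiteDimensional.measurableSet, Measure.smul_apply,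
    Measure.toSphere_preimage_submodule_eq_zero _ hK, smul_zero]

lemma ae_sphereUniform_inner_ne_zero {d : ℕ} {x : EuclideanSpace ℝ (Fin d)} (hx : x ≠ 0) :
    ∀ᵐ w ∂sphereUniform d, ⟪w, x⟫_ℝ ≠ 0 := by
  have hK : (ℝ ∙ x)ᗮ ≠ ⊤ := fun h => hx <| inner_self_eq_zero.mp <|
    Submodule.mem_orthogonal_singleton_iff_inner_right.mp (h ▸ Submodule.mem_top)
  refine measure_mono_null (fun w hw => ?_) (sphereUniform_submodule_eq_zero hK)
  exact Submodule.mem_orthogonal_singleton_iff_inner_left.mpr (not_not.mp hw)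

lemma ptsE_apply (d : ℕ) (i : Fin 8) (j : Fin d) : ptsE d i j = pts d i j := rfl

lemma sgn_relations : sgn 0 = sgn 1 + sgn 2 + sgn 3 ∧ sgn 4 = -sgn 3 ∧ sgn 5 = -sgn 2 ∧
    sgn 6 = -sgn 1 ∧ sgn 7 = -sgn 0 := by
  refine ⟨?_, ?_, ?_, ?_, ?_⟩ <;> funext k <;> fin_cases k <;>
    simp [sgn, Matrix.cons_val]

lemma ptsE_eq (d : ℕ) : ptsE d = ![ptsE d 1 + ptsE d 2 + ptsE d 3, ptsE d 1, ptsE d 2, ptsE d 3,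
    -ptsE d 3, -ptsE d 2, -ptsE d 1, -(ptsE d 1 + ptsE d 2 + ptsE d 3)] := by
  obtain ⟨h0, h4, h5, h6, h7⟩ := sgn_relations
  funext i
  ext j
  fin_cases i <;> by_cases hj : (j : ℕ) < 3 <;>
    simp [ptsE_apply, pts, hj, h0, h4, h5, h6, h7] <;> ring

lemma ptsE_ne_zero {d : ℕ} (hd : 3 ≤ d) (i : Fin 8) : ptsE d i ≠ 0 := by
  intro h
  have := congrArg (fun v : EuclideanSpace ℝ (Fin d) => v ⟨0, by omega⟩) h
  fin_cases i <;> simp [ptsE_apply, pts, sgn] at this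

/-- with the special point set, the population NTK matrix
`G_{ij} = ∫_{S^{d−1}} xᵢᵀxⱼ · 1_{xᵢᵀw>0} · 1_{wᵀxⱼ>0} dσ(w)` satisfies `Gv = 0`
for the nonzero vector `v = (1,−1,−1,−1,1,1,1,−1)`; in particular `G` is singular. -/
theorem stmt_6 (d : ℕ) (hd : 3 ≤ d)
    (G : Matrix (Fin 8) (Fin 8) ℝ)
    (hG : G = Matrix.of fun i j =>
      ∫ w, ⟪ptsE d i, ptsE d j⟫_ℝ *
        ((if 0 < ⟪ptsE d i, w⟫_ℝ then (1 : ℝ) else 0) *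
          (if 0 < ⟪w, ptsE d j⟫_ℝ then (1 : ℝ) else 0)) ∂(sphereUniform d)) :
    vv ≠ 0 ∧ G.mulVec vv = 0 ∧ G.det = 0 := by
  have hv : vv ≠ 0 := fun h => by simpa [vv] using congrFun h 0
  have hGv : G *ᵥ vv = 0 := by
    rw [show G = ntkGram (sphereUniform d) (ptsE d) from hG, ntkGram_mulVec]
    refine funext fun i => integral_eq_zero_of_ae ?_
    filter_upwards [ae_all_iff.2 fun k => ae_sphereUniform_inner_ne_zero (ptsE_ne_zero hd k)]
      with w hw
    rw [sum_vv_mul_heaviside_smul_eq_zero (ptsE_eq d) hw, inner_zero_right, mul_zero,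
      Pi.zero_apply]
  exact ⟨hv, hGv, exists_mulVec_eq_zero_iff.mp ⟨vv, hv, hGv⟩⟩
end

section
/- Let d ≥ 3 and let x₁,…,x₈ ∈ ℝ^d be the special point set. Let m ≥ 1 and let w₁,…,w_m ∈ ℝ^d satisfy wᵢᵀxⱼ ≠ 0 for all 1 ≤ i ≤ m and 1 ≤ j ≤ 8 (a condition holding for almost every choice of unit-norm weights). Define the 8×8 matrix Ĝ by Ĝ_{jk} = (1/m) ∑_{i=1}^{m} xⱼᵀxₖ · 1_{xⱼᵀwᵢ>0} · 1_{xₖᵀwᵢ>0}, where 1_{z>0} equals 1 if z > 0 and 0 otherwise. Then Ĝv = 0 for the nonzero vector v = (1,−1,−1,−1,1,1,1,−1); in particular Ĝ is singular. -/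
open MeasureTheory Matrix
open scoped InnerProductSpace Matrix.Norms.L2Operator

/-! In neuron `i` the `j`-th entry of `Ĝ v` is `χᵢⱼ (xⱼ ⬝ᵥ ∑ₖ vₖ χᵢₖ xₖ)`, where `χᵢₖ` is the gate of
`xₖ`. The eight points form four antipodal pairs `xₖ, x₉₋ₖ` with opposite signs in `v`, and
antipodal gates are complementary since `wᵢ ⬝ᵥ xₖ ≠ 0`; so each pair contributes `vₖ xₖ` whatever `wᵢ`
is, and the inner sum is always `x₁ - x₂ - x₃ - x₄ = 0`. -/

lemma gatedGram_mulVec_eq_zero {ι κ α : Type*} [Fintype ι] [Fintype κ] [Fintype α]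
    (c : ℝ) (x : κ → α → ℝ) (g : ι → κ → ℝ) (v : κ → ℝ)
    (h : ∀ i, ∑ k, (v k * g i k) • x k = 0) :
    (Matrix.of fun j k => c * ∑ i, (x j ⬝ᵥ x k) * (g i j * g i k)) *ᵥ v = 0 := by
  ext j
  have hrow : ∀ i, ∑ k, (x j ⬝ᵥ x k) * (g i j * g i k) * v k = 0 := fun i => by
    calc ∑ k, (x j ⬝ᵥ x k) * (g i j * g i k) * v k
        = g i j * (x j ⬝ᵥ ∑ k, (v k * g i k) • x k) := by
          simp only [dotProduct_sum, dotProduct_smul, smul_eq_mul, Finset.mul_sum]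
          exact Finset.sum_congr rfl fun k _ => by ring
      _ = 0 := by rw [h i, dotProduct_zero, mul_zero]
  calc ∑ k, (c * ∑ i, (x j ⬝ᵥ x k) * (g i j * g i k)) * v k
      = c * ∑ i, ∑ k, (x j ⬝ᵥ x k) * (g i j * g i k) * v k := by
        simp only [Finset.mul_sum, Finset.sum_mul, mul_assoc]
        exact Finset.sum_comm
    _ = 0 := by simp only [hrow, Finset.sum_const_zero, mul_zero]

lemma ite_pos_add_ite_neg_pos {c : ℝ} (hc : c ≠ 0) :
    ((if 0 < c then 1 else 0) + if 0 < -c then 1 else 0 : ℝ) = 1 := by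
  rcases hc.lt_or_gt with h | h
  · simp [h.not_gt, neg_pos.2 h]
  · simp [h, (neg_neg_of_pos h).not_gt]

noncomputable def scaledPad (d : ℕ) : (Fin 3 → ℝ) →ₗ[ℝ] Fin d → ℝ :=
  LinearMap.pi fun j => if h : (j : ℕ) < 3 then (1 / Real.sqrt 3) • LinearMap.proj ⟨j, h⟩ else 0

lemma pts_eq_scaledPad (d : ℕ) (i : Fin 8) : pts d i = scaledPad d (sgn i) := by
  ext j
  by_cases h : (j : ℕ) < 3 <;> simp [pts, scaledPad, h]

lemma pts_antipode (d : ℕ) (k : Fin 8) : pts d (7 - k) = -pts d k := by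
  have hsgn : sgn (7 - k) = -sgn k := by
    fin_cases k <;> ext s <;> fin_cases s <;> simp [sgn]
  rw [pts_eq_scaledPad, pts_eq_scaledPad, hsgn, map_neg]

lemma sum_vv_mul_smul_pts (d : ℕ) (χ : Fin 8 → ℝ) (hχ : ∀ k, χ k + χ (7 - k) = 1) :
    ∑ k, (vv k * χ k) • pts d k = 0 := by
  have h07 : χ 0 + χ 7 = 1 := hχ 0
  have h16 : χ 1 + χ 6 = 1 := hχ 1
  have h25 : χ 2 + χ 5 = 1 := hχ 2
  have h34 : χ 3 + χ 4 = 1 := hχ 3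
  simp only [pts_eq_scaledPad, ← map_smul, ← map_sum]
  convert map_zero (scaledPad d)
  ext s
  fin_cases s <;> simp [Fin.sum_univ_eight, sgn, vv] <;> linarith

lemma sum_vv_gated_pts (d : ℕ) (u : Fin d → ℝ) (hu : ∀ k, pts d k ⬝ᵥ u ≠ 0) :
    ∑ k, (vv k * if 0 < pts d k ⬝ᵥ u then 1 else 0) • pts d k = 0 :=
  sum_vv_mul_smul_pts d _ fun k => by
    simp only [pts_antipode, neg_dotProduct]
    exact ite_pos_add_ite_neg_pos (hu k)

theorem stmt_7_general (d m : ℕ)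
    (w : Fin m → Fin d → ℝ) (hw : ∀ (i : Fin m) (j : Fin 8), w i ⬝ᵥ pts d j ≠ 0)
    (G : Matrix (Fin 8) (Fin 8) ℝ)
    (hG : G = Matrix.of fun j k =>
      (1 / (m : ℝ)) * ∑ i, (pts d j ⬝ᵥ pts d k) *
        ((if 0 < pts d j ⬝ᵥ w i then (1 : ℝ) else 0) *
          (if 0 < pts d k ⬝ᵥ w i then (1 : ℝ) else 0))) :
    vv ≠ 0 ∧ G.mulVec vv = 0 ∧ G.det = 0 := by
  have hv : vv ≠ 0 := fun h => by simpa [vv] using congrFun h 0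
  have hGv : G *ᵥ vv = 0 := by
    rw [hG]
    refine gatedGram_mulVec_eq_zero _ (pts d)
      (fun i k => if 0 < pts d k ⬝ᵥ w i then 1 else 0) vv fun i => ?_
    exact sum_vv_gated_pts d (w i) fun k => by rw [dotProduct_comm]; exact hw i k
  exact ⟨hv, hGv, exists_mulVec_eq_zero_iff.mp ⟨vv, hv, hGv⟩⟩

/-- with the special point set and any weights `w₁,…,w_m` whose inner
products with all eight points are nonzero, the empirical NTK matrix
`Ĝ_{jk} = (1/m) ∑ᵢ xⱼᵀxₖ · 1_{xⱼᵀwᵢ>0} · 1_{xₖᵀwᵢ>0}` satisfies `Ĝv = 0` for the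
nonzero vector `v = (1,−1,−1,−1,1,1,1,−1)`; in particular `Ĝ` is singular. -/
theorem stmt_7 (d m : ℕ) (hd : 3 ≤ d) (hm : 1 ≤ m)
    (w : Fin m → Fin d → ℝ) (hw : ∀ (i : Fin m) (j : Fin 8), w i ⬝ᵥ pts d j ≠ 0)
    (G : Matrix (Fin 8) (Fin 8) ℝ)
    (hG : G = Matrix.of fun j k =>
      (1 / (m : ℝ)) * ∑ i, (pts d j ⬝ᵥ pts d k) *
        ((if 0 < pts d j ⬝ᵥ w i then (1 : ℝ) else 0) *
          (if 0 < pts d k ⬝ᵥ w i then (1 : ℝ) else 0))) :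
    vv ≠ 0 ∧ G.mulVec vv = 0 ∧ G.det = 0 :=
  stmt_7_general d m w hw G hG
end

section
/- Let d ≥ 3, let 0 < ζ ≤ √2, set ℓ = ⌊d/2⌋ + 1, and define the Wendland activation γ : [−1,1] → ℝ by γ(z) = (1 − √(2 − 2z)/ζ)₊^ℓ, where (t)₊ = max(t,0). Then for every n ≥ 1 and all pairwise distinct unit vectors x₁,…,xₙ ∈ S^{d−1}, the matrix H with H_{ij} = ∫_{S^{d−1}} γ(xᵢᵀw) γ(wᵀxⱼ) dσ(w) is strictly positive definite. -/
/-!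
On the sphere `⟪x, w⟫ = 1 - ‖x - w‖² / 2`, so `γ(⟪xᵢ, w⟫) = ψ(‖xᵢ - w‖)` for the radial
Wendland profile `ψ(r) = (1 - r/ζ)₊^ℓ`. Hence `uᵀ H u = ∫ f² dσ` with `f(w) = ∑ᵢ uᵢ ψ(‖xᵢ - w‖)`
continuous, and as `σ` charges every open set meeting the sphere, it suffices that `f` does not
vanish identically on the sphere. Along a curve `c` on the sphere with `c(0) = xᵢ` and
`‖xᵢ - c(t)‖ = |t|`, the `i`-th term of `f ∘ c` is `uᵢ ψ(|t|)`, which has a corner at `t = 0`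
because `ψ'(0) = -ℓ/ζ ≠ 0`, whereas the other terms are differentiable there: `ψ` is `C¹` since
`ℓ ≥ 2`, and `‖xⱼ - c(t)‖` stays away from `0`. So `f ∘ c ≡ 0` forces `uᵢ = 0`.
-/

open MeasureTheory Matrix
open scoped InnerProductSpace Matrix.Norms.L2Operator

open Filter Topology Module

theorem differentiable_max_zero_pow {ℓ : ℕ} (hℓ : 2 ≤ ℓ) :
    Differentiable ℝ fun s : ℝ => max s 0 ^ ℓ := by
  intro a
  rcases lt_trichotomy a 0 with ha | rfl | ha
  · refine (differentiableAt_const (0 : ℝ)).congr_of_eventuallyEq ?_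
    filter_upwards [eventually_lt_nhds ha] with s hs
    rw [max_eq_right hs.le, zero_pow (by omega)]
  · refine (hasDerivAt_iff_isLittleO.2 ?_).differentiableAt (f' := 0)
    have hbound : (fun s : ℝ => max s 0 ^ ℓ) =O[𝓝 0] fun s => ‖s - 0‖ ^ ℓ := by
      refine Asymptotics.IsBigO.of_bound 1 (Eventually.of_forall fun s => ?_)
      rw [one_mul, norm_pow, norm_pow, norm_norm, sub_zero]
      gcongr
      rw [Real.norm_eq_abs, Real.norm_eq_abs, abs_of_nonneg (le_max_right _ _)]
      exact max_le (le_abs_self s) (abs_nonneg s)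
    simpa [zero_pow (by omega : ℓ ≠ 0)] using
      hbound.trans_isLittleO (Asymptotics.isLittleO_pow_sub_sub 0 (by omega))
  · refine (differentiableAt_pow ℓ).congr_of_eventuallyEq ?_
    filter_upwards [eventually_gt_nhds ha] with s hs
    rw [max_eq_left hs.le]

noncomputable def wendland (ζ : ℝ) (ℓ : ℕ) (r : ℝ) : ℝ := max (1 - r / ζ) 0 ^ ℓ

theorem continuous_wendland (ζ : ℝ) (ℓ : ℕ) : Continuous (wendland ζ ℓ) := by
  unfold wendland; fun_prop

theorem differentiable_wendland (ζ : ℝ) {ℓ : ℕ} (hℓ : 2 ≤ ℓ) :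
    Differentiable ℝ (wendland ζ ℓ) :=
  (differentiable_max_zero_pow hℓ).comp
    ((differentiable_const 1).sub (differentiable_id.div_const ζ))

theorem hasDerivAt_wendland_zero (ζ : ℝ) (ℓ : ℕ) : HasDerivAt (wendland ζ ℓ) (-ℓ / ζ) 0 := by
  have hlin : HasDerivAt (fun r : ℝ => 1 - r / ζ) (-(1 / ζ)) 0 :=
    ((hasDerivAt_id' 0).div_const ζ).const_sub 1
  have hpoly : HasDerivAt (fun r : ℝ => (1 - r / ζ) ^ ℓ) (-ℓ / ζ) 0 :=
    (hlin.fun_pow ℓ).congr_deriv (by simp; ring)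
  have hpos : ∀ᶠ r in 𝓝 (0 : ℝ), 0 < 1 - r / ζ :=
    (continuous_const.sub (continuous_id.div_const ζ)).continuousAt.eventually_const_lt (by simp)
  exact hpoly.congr_of_eventuallyEq (hpos.mono fun r hr => by rw [wendland, max_eq_left hr.le])

theorem not_differentiableAt_comp_abs {ψ : ℝ → ℝ} {D : ℝ} (hψ : HasDerivAt ψ D 0) (hD : D ≠ 0) :
    ¬ DifferentiableAt ℝ (fun t => ψ |t|) 0 := by
  intro hdiff
  have hright : HasDerivWithinAt (fun t => ψ |t|) D (Set.Ici 0) 0 :=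
    hψ.hasDerivWithinAt.congr (fun t ht => by rw [abs_of_nonneg ht]) (by simp)
  have hD_eq : D = deriv (fun t => ψ |t|) 0 :=
    (uniqueDiffWithinAt_Ici 0).eq_deriv _ hright hdiff.hasDerivAt.hasDerivWithinAt
  have heven : deriv (fun t => ψ |t|) 0 = -deriv (fun t => ψ |t|) 0 := by
    simpa using deriv_comp_neg (f := fun t => ψ |t|) (x := 0)
  exact hD (by linarith)

section InnerProductSpace

variable {E : Type*} [NormedAddCommGroup E] [InnerProductSpace ℝ E]

theorem exists_norm_eq_one_inner_eq_zero (hE : 1 < finrank ℝ E) (x : E) :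
    ∃ v : E, ‖v‖ = 1 ∧ ⟪x, v⟫_ℝ = 0 := by
  have : FiniteDimensional ℝ E := Module.finite_of_finrank_pos (by omega)
  have hK : 1 ≤ finrank ℝ (ℝ ∙ x)ᗮ := by
    have := (ℝ ∙ x).finrank_add_finrank_orthogonal
    have : finrank ℝ (ℝ ∙ x) ≤ 1 := (finrank_span_le_card ({x} : Set E)).trans (by simp)
    omega
  obtain ⟨v, hvK, hv⟩ := Submodule.exists_mem_ne_zero_of_ne_bot (Submodule.one_le_finrank_iff.1 hK)
  refine ⟨‖v‖⁻¹ • v, norm_smul_inv_norm hv, ?_⟩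
  rw [real_inner_smul_right,
    Submodule.inner_right_of_mem_orthogonal (Submodule.mem_span_singleton_self x) hvK, mul_zero]

theorem norm_smul_add_smul_sq {x v : E} (hx : ‖x‖ = 1) (hv : ‖v‖ = 1) (hxv : ⟪x, v⟫_ℝ = 0)
    (a b : ℝ) : ‖a • x + b • v‖ ^ 2 = a ^ 2 + b ^ 2 := by
  rw [norm_add_sq_real, real_inner_smul_left, real_inner_smul_right, hxv, norm_smul, norm_smul, hx,
    hv, Real.norm_eq_abs, Real.norm_eq_abs]
  ring_nf
  rw [sq_abs, sq_abs]

noncomputable def chordCurve (x v : E) (t : ℝ) : E :=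
  (1 - t ^ 2 / 2) • x + (t * √(1 - t ^ 2 / 4)) • v

section chordCurve

variable {x v : E} {t : ℝ}

@[simp]
theorem chordCurve_zero : chordCurve x v 0 = x := by
  simp [chordCurve]

theorem differentiableAt_chordCurve : DifferentiableAt ℝ (chordCurve x v) 0 := by
  unfold chordCurve
  fun_prop (disch := norm_num)

theorem sq_mul_sqrt_one_sub_sq_div_four (ht : |t| ≤ 2) :
    (t * √(1 - t ^ 2 / 4)) ^ 2 = t ^ 2 - t ^ 4 / 4 := by
  have : t ^ 2 ≤ 4 := by nlinarith [sq_abs t, abs_nonneg t]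
  rw [mul_pow, Real.sq_sqrt (by linarith)]
  ring

theorem norm_chordCurve (hx : ‖x‖ = 1) (hv : ‖v‖ = 1) (hxv : ⟪x, v⟫_ℝ = 0) (ht : |t| ≤ 2) :
    ‖chordCurve x v t‖ = 1 := by
  have hsq : ‖chordCurve x v t‖ ^ 2 = 1 ^ 2 := by
    rw [chordCurve, norm_smul_add_smul_sq hx hv hxv, sq_mul_sqrt_one_sub_sq_div_four ht]
    ring
  exact (sq_eq_sq₀ (norm_nonneg _) zero_le_one).1 hsq

theorem norm_sub_chordCurve (hx : ‖x‖ = 1) (hv : ‖v‖ = 1) (hxv : ⟪x, v⟫_ℝ = 0) (ht : |t| ≤ 2) :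
    ‖x - chordCurve x v t‖ = |t| := by
  have hdiff : x - chordCurve x v t = (t ^ 2 / 2) • x + (-(t * √(1 - t ^ 2 / 4))) • v := by
    rw [chordCurve]
    module
  have hsq : ‖x - chordCurve x v t‖ ^ 2 = |t| ^ 2 := by
    rw [hdiff, norm_smul_add_smul_sq hx hv hxv, neg_sq, sq_mul_sqrt_one_sub_sq_div_four ht, sq_abs]
    ring
  exact (sq_eq_sq₀ (norm_nonneg _) (abs_nonneg t)).1 hsq

end chordCurve

theorem norm_sub_eq_sqrt_two_sub_two_inner {x w : E} (hx : ‖x‖ = 1) (hw : ‖w‖ = 1) :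
    ‖x - w‖ = √(2 - 2 * ⟪x, w⟫_ℝ) := by
  rw [← Real.sqrt_sq (norm_nonneg _), norm_sub_sq_real, hx, hw]
  ring_nf

theorem inner_mem_Icc_of_norm_eq_one {x w : E} (hx : ‖x‖ = 1) (hw : ‖w‖ = 1) :
    ⟪x, w⟫_ℝ ∈ Set.Icc (-1) 1 :=
  abs_le.1 (by simpa [hx, hw] using abs_real_inner_le_norm x w)

theorem eq_zero_of_sum_mul_comp_norm_sub_eq_zero {ι : Type*} [Fintype ι] (hE : 1 < finrank ℝ E)
    {ψ : ℝ → ℝ} {D : ℝ} (hψ0 : HasDerivAt ψ D 0) (hD : D ≠ 0)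
    (hψ : ∀ r, 0 < r → DifferentiableAt ℝ ψ r) {x : ι → E} (hx : ∀ i, ‖x i‖ = 1)
    (hinj : Function.Injective x) {u : ι → ℝ}
    (h : ∀ w : E, ‖w‖ = 1 → ∑ i, u i * ψ ‖x i - w‖ = 0) : u = 0 := by
  classical
  ext i
  rw [Pi.zero_apply]
  by_contra hui
  obtain ⟨v, hv, hxv⟩ := exists_norm_eq_one_inner_eq_zero hE (x i)
  have hrest : DifferentiableAt ℝ
      (fun t => ∑ j ∈ Finset.univ.erase i, u j * ψ ‖x j - chordCurve (x i) v t‖) 0 := by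
    refine DifferentiableAt.fun_sum fun j hj => ?_
    have hne : x j - chordCurve (x i) v 0 ≠ 0 := by
      rw [chordCurve_zero, sub_ne_zero]
      exact hinj.ne (Finset.ne_of_mem_erase hj)
    have hnorm : DifferentiableAt ℝ (fun t => ‖x j - chordCurve (x i) v t‖) 0 :=
      ((differentiableAt_const _).sub differentiableAt_chordCurve).norm ℝ hne
    exact (differentiableAt_const _).mul ((hψ _ (norm_pos_iff.2 hne)).comp 0 hnorm)
  have hsolve : (fun t => ψ |t|) =ᶠ[𝓝 0]
      fun t => -(u i)⁻¹ * ∑ j ∈ Finset.univ.erase i, u j * ψ ‖x j - chordCurve (x i) v t‖ := by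
    filter_upwards [eventually_abs_sub_lt 0 two_pos] with t ht
    rw [sub_zero] at ht
    have hsum := h (chordCurve (x i) v t) (norm_chordCurve (hx i) hv hxv ht.le)
    rw [← Finset.add_sum_erase _ _ (Finset.mem_univ i), norm_sub_chordCurve (hx i) hv hxv ht.le]
      at hsum
    field_simp
    linarith
  exact not_differentiableAt_comp_abs hψ0 hD ((hrest.const_mul _).congr_of_eventuallyEq hsolve)

end InnerProductSpace

theorem dotProduct_mulVec_integral_mul_eq_integral_sq {α ι : Type*} [MeasurableSpace α]
    [Fintype ι] {μ : Measure α} {G : ι → α → ℝ}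
    (hG : ∀ i j, Integrable (fun a => G i a * G j a) μ) (u : ι → ℝ) :
    u ⬝ᵥ (of fun i j => ∫ a, G i a * G j a ∂μ) *ᵥ u = ∫ a, (∑ i, u i * G i a) ^ 2 ∂μ := by
  have hexpand : ∀ a, (∑ i, u i * G i a) ^ 2 = ∑ i, ∑ j, u i * u j * (G i a * G j a) := by
    intro a
    rw [sq, Finset.sum_mul_sum]
    exact Finset.sum_congr rfl fun i _ => Finset.sum_congr rfl fun j _ => by ring
  simp_rw [hexpand]
  rw [integral_finsetSum _ fun i _ => integrable_finsetSum _ fun j _ => (hG i j).const_mul _]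
  simp_rw [integral_finsetSum _ fun j _ => (hG _ j).const_mul _, integral_const_mul]
  simp only [dotProduct, mulVec, of_apply, Finset.mul_sum]
  exact Finset.sum_congr rfl fun i _ => Finset.sum_congr rfl fun j _ => by ring

section sphereUniform

variable {d : ℕ}

theorem sphereUniform_ae_norm_eq_one : ∀ᵐ w ∂sphereUniform d, ‖w‖ = 1 := by
  rw [sphereUniform, ae_map_iff measurable_subtype_coe.aemeasurable
    (measurableSet_eq_fun measurable_norm measurable_const)]
  exact ae_of_all _ fun w => norm_eq_of_mem_sphere w

theorem Continuous.integrable_sphereUniform {F : Type*} [NormedAddCommGroup F]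
    {f : EuclideanSpace ℝ (Fin d) → F} (hf : Continuous f) : Integrable f (sphereUniform d) := by
  rw [sphereUniform, integrable_map_measure hf.aestronglyMeasurable
    measurable_subtype_coe.aemeasurable]
  exact (hf.comp continuous_subtype_val).integrable_of_hasCompactSupport
    (isClosed_tsupport _).isCompact

theorem sphereUniform_pos_of_isOpen {U : Set (EuclideanSpace ℝ (Fin d))} (hU : IsOpen U)
    {w : EuclideanSpace ℝ (Fin d)} (hwU : w ∈ U) (hw : ‖w‖ = 1) : 0 < sphereUniform d U := by
  rw [sphereUniform, Measure.map_apply measurable_subtype_coe hU.measurableSet,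
    Measure.smul_apply, smul_eq_mul]
  exact ENNReal.mul_pos (ENNReal.inv_ne_zero.2 (measure_ne_top _ _))
    ((hU.preimage continuous_subtype_val).measure_ne_zero _ ⟨⟨w, by simpa using hw⟩, hwU⟩)

theorem integral_sphereUniform_pos {g : EuclideanSpace ℝ (Fin d) → ℝ} (hg : Continuous g)
    (hg0 : 0 ≤ g) {w : EuclideanSpace ℝ (Fin d)} (hw : ‖w‖ = 1) (hgw : 0 < g w) :
    0 < ∫ v, g v ∂sphereUniform d := by
  rw [integral_pos_iff_support_of_nonneg hg0 hg.integrable_sphereUniform]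
  exact sphereUniform_pos_of_isOpen (isOpen_ne_fun hg continuous_const) hgw.ne' hw

end sphereUniform

theorem stmt_9_general (d : ℕ) (hd : 3 ≤ d) (ζ : ℝ) (hζ0 : 0 < ζ)
    (γ : ℝ → ℝ)
    (hγ : ∀ z ∈ Set.Icc (-1 : ℝ) 1,
      γ z = max (1 - Real.sqrt (2 - 2 * z) / ζ) 0 ^ (d / 2 + 1))
    (n : ℕ)
    (x : Fin n → EuclideanSpace ℝ (Fin d)) (hx : ∀ i, ‖x i‖ = 1)
    (hdist : Function.Injective x)
    (H : Matrix (Fin n) (Fin n) ℝ)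
    (hH : H = Matrix.of fun i j => ∫ w, γ ⟪x i, w⟫_ℝ * γ ⟪w, x j⟫_ℝ ∂(sphereUniform d)) :
    ∀ u : Fin n → ℝ, u ≠ 0 → 0 < u ⬝ᵥ H.mulVec u := by
  intro u hu
  set ℓ := d / 2 + 1
  set G : Fin n → EuclideanSpace ℝ (Fin d) → ℝ := fun i w => wendland ζ ℓ ‖x i - w‖
  have hG : ∀ i, Continuous (G i) := fun i =>
    (continuous_wendland ζ ℓ).comp (continuous_const.sub continuous_id).norm
  have hγG : ∀ i w, ‖w‖ = 1 → γ ⟪x i, w⟫_ℝ = G i w := fun i w hw => by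
    rw [hγ _ (inner_mem_Icc_of_norm_eq_one (hx i) hw)]
    simp only [G, wendland, norm_sub_eq_sqrt_two_sub_two_inner (hx i) hw]
  have hHG : H = of fun i j => ∫ w, G i w * G j w ∂sphereUniform d := by
    rw [hH]
    ext i j
    refine integral_congr_ae ?_
    filter_upwards [sphereUniform_ae_norm_eq_one] with w hw
    rw [real_inner_comm (x j) w, hγG i w hw, hγG j w hw]
  obtain ⟨w, hw, hfw⟩ : ∃ w : EuclideanSpace ℝ (Fin d), ‖w‖ = 1 ∧ ∑ i, u i * G i w ≠ 0 := by
    by_contra! hvanish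
    have hdim : 1 < finrank ℝ (EuclideanSpace ℝ (Fin d)) := by
      rw [finrank_euclideanSpace_fin]; omega
    have hcorner : -(ℓ : ℝ) / ζ ≠ 0 :=
      (div_neg_of_neg_of_pos (neg_neg_of_pos (by positivity)) hζ0).ne
    exact hu (eq_zero_of_sum_mul_comp_norm_sub_eq_zero hdim (hasDerivAt_wendland_zero ζ ℓ) hcorner
      (fun r _ => differentiable_wendland ζ (by omega) r) hx hdist hvanish)
  rw [hHG, dotProduct_mulVec_integral_mul_eq_integral_sq
    fun i j => ((hG i).mul (hG j)).integrable_sphereUniform]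
  exact integral_sphereUniform_pos (by fun_prop) (fun w => sq_nonneg _) hw (by positivity)

/-- the Wendland activation `γ(z) = (1 − √(2−2z)/ζ)₊^ℓ` with
`ℓ = ⌊d/2⌋ + 1` and `0 < ζ ≤ √2` yields a strictly positive definite population
matrix `H` for any pairwise distinct unit vectors `x₁,…,xₙ`. -/
theorem stmt_9 (d : ℕ) (hd : 3 ≤ d) (ζ : ℝ) (hζ0 : 0 < ζ) (hζ2 : ζ ≤ Real.sqrt 2)
    (γ : ℝ → ℝ)
    (hγ : ∀ z ∈ Set.Icc (-1 : ℝ) 1,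
      γ z = max (1 - Real.sqrt (2 - 2 * z) / ζ) 0 ^ (d / 2 + 1))
    (n : ℕ) (hn : 1 ≤ n)
    (x : Fin n → EuclideanSpace ℝ (Fin d)) (hx : ∀ i, ‖x i‖ = 1)
    (hdist : Function.Injective x)
    (H : Matrix (Fin n) (Fin n) ℝ)
    (hH : H = Matrix.of fun i j => ∫ w, γ ⟪x i, w⟫_ℝ * γ ⟪w, x j⟫_ℝ ∂(sphereUniform d)) :
    ∀ u : Fin n → ℝ, u ≠ 0 → 0 < u ⬝ᵥ H.mulVec u :=
  stmt_9_general d hd ζ hζ0 γ hγ n x hx hdist H hH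
end
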